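/- Let μ, μ̄, μ̃, η, η̄, η̃, λ, λ̄, λ̃, ρ, ρ̄, ρ̃ be real numbers, define g(φ) = ((μ + μ̄cos φ − μ̃sin φ)/(η + η̄cos φ − η̃sin φ))·((λ + λ̄cos φ − λ̃sin φ)/(ρ + ρ̄cos φ − ρ̃sin φ)), and with Q(a,b,c)(t) = a(1+t²) + b(1−t²) − 2ct write Qμ, Qη, Qλ, Qρ for the four quadratics with the corresponding parameter triples. Suppose φ* ∈ (−π, π) is a local maximum of g, and set t = tan(φ*/2). If Qμ(t), Qη(t), Qλ(t), Qρ(t) are all nonzero, then t satisfies ((μ−μ̄)t−μ̃)/Qμ(t) − ((η−η̄)t−η̃)/Qη(t) + ((λ−λ̄)t−λ̃)/Qλ(t) − ((ρ−ρ̄)t−ρ̃)/Qρ(t) = 0. -/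

import Mathlib

open Real

private lemma cos_two_arctan (s : ℝ) : Real.cos (2 * Real.arctan s) = (1 - s^2) / (1 + s^2) := by
  have hpos : (0:ℝ) < 1 + s^2 := by positivity
  rw [Real.cos_two_mul, Real.cos_arctan]
  rw [div_pow, one_pow, Real.sq_sqrt hpos.le]
  field_simp
  ring

private lemma sin_two_arctan (s : ℝ) : Real.sin (2 * Real.arctan s) = 2 * s / (1 + s^2) := by
  have hpos : (0:ℝ) < 1 + s^2 := by positivity
  rw [Real.sin_two_mul, Real.sin_arctan, Real.cos_arctan]
  have hne : Real.sqrt (1 + s^2) ≠ 0 := by positivity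
  field_simp
  rw [Real.sq_sqrt hpos.le]

set_option maxRecDepth 8000 in
set_option maxHeartbeats 2000000 in
/-- Theorem 1 of the paper: if `φ* ∈ (-π, π)` is a local maximum of the
per-element secrecy-rate objective `g` and `t = tan (φ*/2)`, then (provided
the four quadratics are nonzero at `t`) `t` satisfies the stationarity
equation (42). -/
theorem stmt_3 (μ μ' μ'' η η' η'' lam lam' lam'' ρ ρ' ρ'' φs : ℝ)
    (hφ : φs ∈ Set.Ioo (-Real.pi) Real.pi)
    (hmax : IsLocalMax (fun φ : ℝ =>
      ((μ + μ' * Real.cos φ - μ'' * Real.sin φ) /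
        (η + η' * Real.cos φ - η'' * Real.sin φ)) *
      ((lam + lam' * Real.cos φ - lam'' * Real.sin φ) /
        (ρ + ρ' * Real.cos φ - ρ'' * Real.sin φ))) φs)
    (t : ℝ) (ht : t = Real.tan (φs / 2))
    (hμ : μ * (1 + t ^ 2) + μ' * (1 - t ^ 2) - 2 * μ'' * t ≠ 0)
    (hη : η * (1 + t ^ 2) + η' * (1 - t ^ 2) - 2 * η'' * t ≠ 0)
    (hlam : lam * (1 + t ^ 2) + lam' * (1 - t ^ 2) - 2 * lam'' * t ≠ 0)
    (hρ : ρ * (1 + t ^ 2) + ρ' * (1 - t ^ 2) - 2 * ρ'' * t ≠ 0) :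
    ((μ - μ') * t - μ'') / (μ * (1 + t ^ 2) + μ' * (1 - t ^ 2) - 2 * μ'' * t)
      - ((η - η') * t - η'') / (η * (1 + t ^ 2) + η' * (1 - t ^ 2) - 2 * η'' * t)
      + ((lam - lam') * t - lam'') /
          (lam * (1 + t ^ 2) + lam' * (1 - t ^ 2) - 2 * lam'' * t)
      - ((ρ - ρ') * t - ρ'') / (ρ * (1 + t ^ 2) + ρ' * (1 - t ^ 2) - 2 * ρ'' * t)
      = 0 := by
  -- the rational substitution
  set P : ℝ → ℝ → ℝ → ℝ → ℝ := fun a b c s => a * (1 + s^2) + b * (1 - s^2) - 2 * c * s with hP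
  set r : ℝ → ℝ := fun s => (P μ μ' μ'' s / P η η' η'' s) * (P lam lam' lam'' s / P ρ ρ' ρ'' s)
    with hr
  -- r s = g (2 arctan s)
  have hcomp : ∀ s : ℝ, (fun φ : ℝ =>
      ((μ + μ' * Real.cos φ - μ'' * Real.sin φ) /
        (η + η' * Real.cos φ - η'' * Real.sin φ)) *
      ((lam + lam' * Real.cos φ - lam'' * Real.sin φ) /
        (ρ + ρ' * Real.cos φ - ρ'' * Real.sin φ))) (2 * Real.arctan s) = r s := by
    intro s
    have hpos : (0:ℝ) < 1 + s^2 := by positivity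
    have key : ∀ a b c : ℝ, a + b * Real.cos (2 * Real.arctan s) - c * Real.sin (2 * Real.arctan s)
        = P a b c s / (1 + s^2) := by
      intro a b c
      rw [cos_two_arctan, sin_two_arctan, hP]
      field_simp
    have hcancel : ∀ x y : ℝ, x / (1 + s^2) / (y / (1 + s^2)) = x / y := by
      intro x y
      rcases eq_or_ne y 0 with h | h
      · simp [h]
      · field_simp
    simp only [key, hr]
    rw [hcancel, hcancel]
  -- φs recovered from t
  have hhalf : 2 * Real.arctan t = φs := by
    rw [ht, Real.arctan_tan (by linarith [hφ.1]) (by linarith [hφ.2])]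
    ring
  -- r has a local max at t
  have hrmax : IsLocalMax r t := by
    have hc : ContinuousAt (fun s : ℝ => 2 * Real.arctan s) t :=
      (Real.continuous_arctan.continuousAt).const_mul 2
    have := hmax
    rw [← hhalf] at this
    have hev := hc.tendsto.eventually this
    refine hev.mono fun s hs => ?_
    rw [← hcomp s, ← hcomp t]
    simpa using hs
  -- derivative of each quadratic
  have hPd : ∀ a b c : ℝ, HasDerivAt (fun s : ℝ => P a b c s) (2*a*t - 2*b*t - 2*c) t := by
    intro a b c
    have h1 : HasDerivAt (fun s : ℝ => s^2) (2*t) t := by simpa using hasDerivAt_pow 2 t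
    have h2 : HasDerivAt (fun s : ℝ => a * (1 + s^2)) (a * (2*t)) t :=
      (h1.const_add 1).const_mul a
    have h3 : HasDerivAt (fun s : ℝ => b * (1 - s^2)) (b * (-(2*t))) t :=
      (h1.const_sub 1).const_mul b
    have h4 : HasDerivAt (fun s : ℝ => 2 * c * s) (2*c) t := by
      simpa using (hasDerivAt_id t).const_mul (2*c)
    have := (h2.add h3).sub h4
    exact this.congr_deriv (by ring)
  have hder : HasDerivAt r
      (((2*μ*t - 2*μ'*t - 2*μ'') * P η η' η'' t - P μ μ' μ'' t * (2*η*t - 2*η'*t - 2*η''))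
          / (P η η' η'' t)^2 * (P lam lam' lam'' t / P ρ ρ' ρ'' t)
        + (P μ μ' μ'' t / P η η' η'' t) *
          (((2*lam*t - 2*lam'*t - 2*lam'') * P ρ ρ' ρ'' t
              - P lam lam' lam'' t * (2*ρ*t - 2*ρ'*t - 2*ρ'')) / (P ρ ρ' ρ'' t)^2)) t :=
    ((hPd μ μ' μ'').div (hPd η η' η'') hη).mul ((hPd lam lam' lam'').div (hPd ρ ρ' ρ'') hρ)
  have hzero := hrmax.deriv_eq_zero
  rw [hder.deriv] at hzero
  simp only [hP] at hzero ⊢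
  have hgen : ∀ n1 n2 n3 n4 q1 q2 q3 q4 : ℝ, q1 ≠ 0 → q2 ≠ 0 → q3 ≠ 0 → q4 ≠ 0 →
      (2*n1*q2 - q1*(2*n2))/q2^2 * (q3/q4) + q1/q2 * ((2*n3*q4 - q3*(2*n4))/q4^2) = 0 →
      n1/q1 - n2/q2 + n3/q3 - n4/q4 = 0 := by
    intro n1 n2 n3 n4 q1 q2 q3 q4 h1 h2 h3 h4 hz
    have key : n1/q1 - n2/q2 + n3/q3 - n4/q4 =
        ((2*n1*q2 - q1*(2*n2))/q2^2 * (q3/q4) + q1/q2 * ((2*n3*q4 - q3*(2*n4))/q4^2))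
          * (q2*q4/(2*q1*q3)) := by
      field_simp
      ring
    rw [key, hz, zero_mul]
  refine hgen _ _ _ _ _ _ _ _ hμ hη hlam hρ ?_
  linear_combination hzero
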